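/- The multivariable Krawtchouk polynomials K_ν(x; ρ, N) satisfy the self-duality K_ν(x; ρ, N) = K_{ν̃}(x̃; ρ̃, N), where x̃_j = ν_{d+1−j}, ν̃_j = x_{d+1−j}, and ρ̃_j = ρ_{d+1−j}(1−|ρ|) / [(1−|ρ_{d+1−j}^{(partial)}|)(1−|ρ_{d−j}^{(partial)}|)], with |ρ_k^{(partial)}| = ρ₁+⋯+ρ_k. Moreover, the map (x,ν,ρ) ↦ (x̃,ν̃,ρ̃) is an involution, and |ρ̃| = |ρ|. -/

import Mathlib

open Finset

/-- Pochhammer symbol `(a)_n = a(a+1)⋯(a+n-1)`. -/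
noncomputable def poch (a : ℝ) (n : ℕ) : ℝ := ∏ k ∈ Finset.range n, (a + k)

/-- Terminating Gauss hypergeometric sum `₂F₁(-n, b; c; z)`. -/
noncomputable def F21 (n : ℕ) (b c z : ℝ) : ℝ :=
  ∑ k ∈ Finset.range (n + 1),
    poch (-(n : ℝ)) k * poch b k / (poch c k * (Nat.factorial k : ℝ)) * z ^ k

/-- Terminating hypergeometric sum `₄F₃(-m, X, Y, Z; U, V, W; 1)`. -/
noncomputable def F43 (m : ℕ) (X Y Z U V W : ℝ) : ℝ :=
  ∑ k ∈ Finset.range (m + 1),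
    poch (-(m : ℝ)) k * poch X k * poch Y k * poch Z k /
      (poch U k * poch V k * poch W k * (Nat.factorial k : ℝ))

/-- Classical Jacobi polynomial `P_n^{(α,β)}`. -/
noncomputable def jacobiP (α β : ℝ) (n : ℕ) (x : ℝ) : ℝ :=
  poch (α + 1) n / (Nat.factorial n : ℝ) *
    ∑ k ∈ Finset.range (n + 1),
      poch (-(n : ℝ)) k * poch ((n : ℝ) + α + β + 1) k /
        (poch (α + 1) k * (Nat.factorial k : ℝ)) * ((1 - x) / 2) ^ k

/-- The multivariable Krawtchouk polynomial `K_ν(x; ρ, N)` (0-based indexing). -/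
noncomputable def krawtchouk (d N : ℕ) (ρ : Fin d → ℝ) (ν x : Fin d → ℕ) : ℝ :=
  (1 / poch (-(N : ℝ)) (∑ i, ν i)) *
    ∏ j : Fin d,
      (poch (-(N : ℝ) +
          (∑ i ∈ Finset.univ.filter (fun i : Fin d => (i : ℕ) < (j : ℕ)), (x i : ℝ)) +
          (∑ i ∈ Finset.univ.filter (fun i : Fin d => (j : ℕ) < (i : ℕ)), (ν i : ℝ))) (ν j) *
        F21 (ν j) (-(x j : ℝ))
          (-(N : ℝ) +
            (∑ i ∈ Finset.univ.filter (fun i : Fin d => (i : ℕ) < (j : ℕ)), (x i : ℝ)) +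
            (∑ i ∈ Finset.univ.filter (fun i : Fin d => (j : ℕ) < (i : ℕ)), (ν i : ℝ)))
          ((1 - ∑ i ∈ Finset.univ.filter (fun i : Fin d => (i : ℕ) < (j : ℕ)), ρ i) / ρ j))

/-- The dual Krawtchouk parameters
`ρ̃_j = ρ_{d+1-j}(1-|ρ|)/[(1-|ρ_{d+1-j}|)(1-|ρ_{d-j}|)]` (0-based indexing, via `Fin.rev`). -/
noncomputable def dualRho (d : ℕ) (ρ : Fin d → ℝ) : Fin d → ℝ :=
  fun j =>
    ρ (Fin.rev j) * (1 - ∑ i, ρ i) /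
      ((1 - ∑ i ∈ Finset.univ.filter (fun i : Fin d => (i : ℕ) ≤ ((Fin.rev j : Fin d) : ℕ)), ρ i) *
        (1 - ∑ i ∈ Finset.univ.filter (fun i : Fin d => (i : ℕ) < ((Fin.rev j : Fin d) : ℕ)), ρ i))

/-!
Write `c_j = -N + x₁ + ⋯ + x_{j-1} + ν_{j+1} + ⋯ + ν_d` for the lower parameter of the `j`-th
₂F₁ factor. Reversing the coordinates of `x` and `ν` and exchanging them turns `c_j` into
`c_{d+1-j}`, and a terminating ₂F₁ is symmetric in its two numerator parameters `-ν_j, -x_j`.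
What remains is the Pochhammer prefactor, where `∏ⱼ (cⱼ)_{νⱼ} (-N)_{|x|} = ∏ⱼ (cⱼ)_{xⱼ} (-N)_{|ν|}`
by telescoping.

For the parameters put `uₖ = 1 - ρ₁ - ⋯ - ρₖ`, so that `ρ_j = u_{j-1} - u_j` and the ₂F₁
argument is `u_{j-1} / ρ_j`. Then `ρ̃_j = u_d / u_{d+1-j} - u_d / u_{d-j}`, hence
`ũₖ = u_d / u_{d-k}`: this gives `ũ_d = u_d` (that is, `|ρ̃| = |ρ|`), `ũ̃ = u` (the involution),
and carries the argument of the `j`-th factor to that of the `(d+1-j)`-th.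
-/

theorem poch_add (a : ℝ) (m n : ℕ) : poch a (m + n) = poch a m * poch (a + m) n := by
  rw [poch, prod_range_add]
  congr 1
  exact prod_congr rfl fun k _ => by push_cast; ring

theorem poch_mul_poch_add_comm (a : ℝ) (m n : ℕ) :
    poch a m * poch (a + m) n = poch a n * poch (a + n) m := by
  rw [← poch_add, ← poch_add, add_comm]

theorem poch_neg_natCast_of_lt {n k : ℕ} (h : n < k) : poch (-(n : ℝ)) k = 0 :=
  prod_eq_zero (mem_range.2 h) (by simp)

theorem poch_neg_natCast_ne_zero {N m : ℕ} (h : m ≤ N) : poch (-(N : ℝ)) m ≠ 0 := by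
  refine prod_ne_zero_iff.2 fun k hk => ?_
  have : (k : ℝ) < N := by exact_mod_cast (mem_range.1 hk).trans_le h
  linarith

theorem F21_neg_natCast_comm (n m : ℕ) (c z : ℝ) :
    F21 n (-(m : ℝ)) c z = F21 m (-(n : ℝ)) c z := by
  have extend : ∀ n m : ℕ, F21 n (-(m : ℝ)) c z = ∑ k ∈ range (n + m + 1),
      poch (-(n : ℝ)) k * poch (-(m : ℝ)) k / (poch c k * (k.factorial : ℝ)) * z ^ k := by
    intro n m
    refine sum_subset (range_subset_range.2 (by omega)) fun k hk hkn => ?_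
    rw [poch_neg_natCast_of_lt (by simp only [mem_range] at hk hkn; omega)]
    ring
  rw [extend, extend, add_comm n m]
  exact sum_congr rfl fun k _ => by ring

section LowerParam

variable {d : ℕ}

noncomputable def lowerParam (a : ℝ) (x ν : Fin d → ℕ) (j : Fin d) : ℝ :=
  a + (∑ i ∈ Finset.univ.filter (fun i : Fin d => (i : ℕ) < (j : ℕ)), (x i : ℝ)) +
    (∑ i ∈ Finset.univ.filter (fun i : Fin d => (j : ℕ) < (i : ℕ)), (ν i : ℝ))

theorem lowerParam_zero (a : ℝ) (x ν : Fin (d + 1) → ℕ) :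
    lowerParam a x ν 0 = a + ((∑ i : Fin d, ν i.succ : ℕ) : ℝ) := by
  simp [lowerParam, sum_filter, Fin.sum_univ_succ]

theorem lowerParam_succ (a : ℝ) (x ν : Fin (d + 1) → ℕ) (k : Fin d) :
    lowerParam a x ν k.succ = lowerParam (a + x 0) (Fin.tail x) (Fin.tail ν) k := by
  simp [lowerParam, sum_filter, Fin.sum_univ_succ, Fin.tail, add_assoc]

theorem sum_filter_lt_rev {M : Type*} [AddCommMonoid M] (f : Fin d → M) (j : Fin d) :
    ∑ i ∈ univ.filter (fun i : Fin d => (i : ℕ) < (j.rev : ℕ)), f i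
      = ∑ i ∈ univ.filter (fun i : Fin d => (j : ℕ) < (i : ℕ)), f i.rev := by
  simp only [sum_filter]
  rw [← Equiv.sum_comp Fin.revPerm]
  refine sum_congr rfl fun i _ => ?_
  simp only [Fin.revPerm_apply, Fin.val_rev]
  exact if_congr (by omega) rfl rfl

theorem sum_filter_rev_lt {M : Type*} [AddCommMonoid M] (f : Fin d → M) (j : Fin d) :
    ∑ i ∈ univ.filter (fun i : Fin d => (j.rev : ℕ) < (i : ℕ)), f i
      = ∑ i ∈ univ.filter (fun i : Fin d => (i : ℕ) < (j : ℕ)), f i.rev := by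
  simp only [sum_filter]
  rw [← Equiv.sum_comp Fin.revPerm]
  refine sum_congr rfl fun i _ => ?_
  simp only [Fin.revPerm_apply, Fin.val_rev]
  exact if_congr (by omega) rfl rfl

theorem lowerParam_rev (a : ℝ) (x ν : Fin d → ℕ) (j : Fin d) :
    lowerParam a (fun i => ν i.rev) (fun i => x i.rev) j = lowerParam a x ν j.rev := by
  rw [lowerParam, lowerParam, sum_filter_lt_rev, sum_filter_rev_lt, add_right_comm]

/-- Morally `∏ⱼ (cⱼ)_{νⱼ} / (cⱼ)_{xⱼ} = Γ(a + |ν|) / Γ(a + |x|)` by telescoping; stated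
multiplicatively so that it also holds where the Gamma factors have poles. -/
theorem prod_poch_lowerParam_mul_poch (a : ℝ) (x ν : Fin d → ℕ) :
    (∏ j, poch (lowerParam a x ν j) (ν j)) * poch a (∑ i, x i)
      = (∏ j, poch (lowerParam a x ν j) (x j)) * poch a (∑ i, ν i) := by
  induction d generalizing a with
  | zero => simp
  | succ d ih =>
    simp only [Fin.prod_univ_succ, Fin.sum_univ_succ, lowerParam_zero, lowerParam_succ]
    set m := ∑ i : Fin d, ν i.succ
    have htail := ih (a + x 0) (Fin.tail x) (Fin.tail ν)
    simp only [Fin.tail] at htail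
    rw [poch_add a (x 0), add_comm (ν 0), poch_add a m]
    set B := ∏ j : Fin d, poch (lowerParam (a + x 0) (Fin.tail x) (Fin.tail ν) j) (x j.succ)
    linear_combination (poch (a + m) (ν 0) * poch a (x 0)) * htail +
      (poch (a + m) (ν 0) * B) * poch_mul_poch_add_comm a (x 0) m

end LowerParam

section KrawtchoukOfArgs

variable {d : ℕ}

/-- `krawtchouk d N ρ` with the ₂F₁ arguments `(1 - ρ₁ - ⋯ - ρ_{j-1}) / ρ_j` replaced by
arbitrary `z j`. -/
noncomputable def krawtchoukOfArgs (N : ℕ) (z : Fin d → ℝ) (ν x : Fin d → ℕ) : ℝ :=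
  1 / poch (-(N : ℝ)) (∑ i, ν i) *
    ∏ j, (poch (lowerParam (-(N : ℝ)) x ν j) (ν j) *
      F21 (ν j) (-(x j : ℝ)) (lowerParam (-(N : ℝ)) x ν j) (z j))

theorem krawtchoukOfArgs_rev (N : ℕ) (z : Fin d → ℝ) (x ν : Fin d → ℕ)
    (hx : ∑ i, x i ≤ N) (hν : ∑ i, ν i ≤ N) :
    krawtchoukOfArgs N (fun j => z j.rev) (fun j => x j.rev) (fun j => ν j.rev)
      = krawtchoukOfArgs N z ν x := by
  have hsum : ∑ i : Fin d, x i.rev = ∑ i, x i := Fintype.sum_equiv Fin.revPerm _ _ fun _ => rfl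
  rw [krawtchoukOfArgs, krawtchoukOfArgs, hsum, ← Equiv.prod_comp Fin.revPerm]
  simp only [Fin.revPerm_apply, Fin.rev_rev, lowerParam_rev, F21_neg_natCast_comm (x _),
    prod_mul_distrib]
  have hpx := poch_neg_natCast_ne_zero hx
  have hpν := poch_neg_natCast_ne_zero hν
  field_simp
  linear_combination (∏ j, F21 (ν j) (-(x j : ℝ)) (lowerParam (-(N : ℝ)) x ν j) (z j)) *
    (prod_poch_lowerParam_mul_poch (-(N : ℝ)) x ν).symm

end KrawtchoukOfArgs

section TailMass

variable {d : ℕ}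

noncomputable def tailMass (ρ : Fin d → ℝ) (k : ℕ) : ℝ :=
  1 - ∑ i ∈ Finset.univ.filter (fun i : Fin d => (i : ℕ) < k), ρ i

theorem tailMass_zero (ρ : Fin d → ℝ) : tailMass ρ 0 = 1 := by
  simp [tailMass]

theorem tailMass_of_le (ρ : Fin d → ℝ) {k : ℕ} (hk : d ≤ k) : tailMass ρ k = 1 - ∑ i, ρ i := by
  rw [tailMass, filter_true_of_mem fun i _ => i.isLt.trans_le hk]

theorem tailMass_sub_tailMass_succ (ρ : Fin d → ℝ) (j : Fin d) :
    tailMass ρ j - tailMass ρ (j + 1) = ρ j := by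
  have hfilter : univ.filter (fun i : Fin d => (i : ℕ) < j + 1)
      = insert j (univ.filter (fun i : Fin d => (i : ℕ) < j)) := by
    ext i
    simp only [mem_filter, mem_univ, true_and, mem_insert, Fin.ext_iff]
    omega
  rw [tailMass, tailMass, hfilter, sum_insert (by simp)]
  ring

theorem tailMass_pos {ρ : Fin d → ℝ} (h0 : ∀ i, 0 ≤ ρ i) (hs : ∑ i, ρ i < 1) (k : ℕ) :
    0 < tailMass ρ k := by
  have := sum_le_sum_of_subset_of_nonneg (filter_subset (fun i : Fin d => (i : ℕ) < k) univ)
    fun i _ _ => h0 i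
  rw [tailMass]
  linarith

theorem dualRho_eq_sub {ρ : Fin d → ℝ} (hu : ∀ k ≤ d, tailMass ρ k ≠ 0) (j : Fin d) :
    dualRho d ρ j = tailMass ρ d / tailMass ρ (j.rev + 1) - tailMass ρ d / tailMass ρ j.rev := by
  have hdual : dualRho d ρ j
      = ρ j.rev * tailMass ρ d / (tailMass ρ (j.rev + 1) * tailMass ρ j.rev) := by
    rw [tailMass_of_le ρ le_rfl]
    simp only [dualRho, tailMass, Nat.lt_succ_iff]
  have h₁ := hu (j.rev + 1) j.rev.isLt
  have h₂ := hu j.rev j.rev.isLt.le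
  rw [hdual, ← tailMass_sub_tailMass_succ ρ j.rev]
  field_simp

theorem tailMass_dualRho {ρ : Fin d → ℝ} (hu : ∀ k ≤ d, tailMass ρ k ≠ 0) {k : ℕ}
    (hk : k ≤ d) :
    tailMass (dualRho d ρ) k = tailMass ρ d / tailMass ρ (d - k) := by
  induction k with
  | zero => rw [tailMass_zero, Nat.sub_zero, div_self (hu d le_rfl)]
  | succ k ih =>
    have hrev : ((⟨k, hk⟩ : Fin d).rev : ℕ) = d - (k + 1) := Fin.val_rev _
    have hstep := tailMass_sub_tailMass_succ (dualRho d ρ) ⟨k, hk⟩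
    rw [dualRho_eq_sub hu, hrev, show d - (k + 1) + 1 = d - k by omega] at hstep
    change tailMass _ k - tailMass _ (k + 1) = _ at hstep
    rw [ih (by omega)] at hstep
    linarith

theorem sum_dualRho {ρ : Fin d → ℝ} (hu : ∀ k ≤ d, tailMass ρ k ≠ 0) :
    ∑ i, dualRho d ρ i = ∑ i, ρ i := by
  have h := tailMass_dualRho hu le_rfl
  rw [Nat.sub_self, tailMass_zero, div_one, tailMass_of_le _ le_rfl, tailMass_of_le _ le_rfl] at h
  linarith

theorem tailMass_dualRho_ne_zero {ρ : Fin d → ℝ} (hu : ∀ k ≤ d, tailMass ρ k ≠ 0) :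
    ∀ k ≤ d, tailMass (dualRho d ρ) k ≠ 0 := fun k hk => by
  rw [tailMass_dualRho hu hk]
  exact div_ne_zero (hu d le_rfl) (hu _ (Nat.sub_le d k))

theorem tailMass_dualRho_dualRho {ρ : Fin d → ℝ} (hu : ∀ k ≤ d, tailMass ρ k ≠ 0) {k : ℕ}
    (hk : k ≤ d) :
    tailMass (dualRho d (dualRho d ρ)) k = tailMass ρ k := by
  rw [tailMass_dualRho (tailMass_dualRho_ne_zero hu) hk, tailMass_dualRho hu le_rfl,
    tailMass_dualRho hu (Nat.sub_le d k), Nat.sub_sub_self hk, Nat.sub_self, tailMass_zero, div_one]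
  have := hu d le_rfl
  have := hu k hk
  field_simp

theorem dualRho_dualRho {ρ : Fin d → ℝ} (hu : ∀ k ≤ d, tailMass ρ k ≠ 0) :
    dualRho d (dualRho d ρ) = ρ := by
  funext j
  rw [← tailMass_sub_tailMass_succ (dualRho d (dualRho d ρ)) j,
    tailMass_dualRho_dualRho hu j.isLt.le, tailMass_dualRho_dualRho hu j.isLt,
    tailMass_sub_tailMass_succ ρ j]

theorem tailMass_div_dualRho {ρ : Fin d → ℝ} (hu : ∀ k ≤ d, tailMass ρ k ≠ 0) (j : Fin d) :
    tailMass (dualRho d ρ) j / dualRho d ρ j = tailMass ρ j.rev / ρ j.rev := by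
  have hrev : d - (j : ℕ) = j.rev + 1 := by rw [Fin.val_rev]; omega
  rw [tailMass_dualRho hu j.isLt.le, dualRho_eq_sub hu, hrev,
    ← tailMass_sub_tailMass_succ ρ j.rev]
  have := hu d le_rfl
  have := hu (j.rev + 1) j.rev.isLt
  have := hu j.rev j.rev.isLt.le
  field_simp

end TailMass

/-- Self-duality of the multivariable Krawtchouk polynomials:
`K_ν(x; ρ, N) = K_{ν̃}(x̃; ρ̃, N)` with `x̃_j = ν_{d+1-j}`, `ν̃_j = x_{d+1-j}`;
moreover the map `(x,ν,ρ) ↦ (x̃,ν̃,ρ̃)` is an involution, and `|ρ̃| = |ρ|`. -/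
theorem stmt_14 (d N : ℕ) (ρ : Fin d → ℝ)
    (hρ : ∀ i, 0 < ρ i ∧ ρ i < 1) (hρs : ∑ i, ρ i < 1)
    (x ν : Fin d → ℕ) (hx : ∑ i, x i ≤ N) (hν : ∑ i, ν i ≤ N) :
    krawtchouk d N ρ ν x =
      krawtchouk d N (dualRho d ρ) (fun j => x (Fin.rev j)) (fun j => ν (Fin.rev j)) ∧
    dualRho d (dualRho d ρ) = ρ ∧
    (fun j => (fun i => ν (Fin.rev i)) (Fin.rev j)) = ν ∧
    (fun j => (fun i => x (Fin.rev i)) (Fin.rev j)) = x ∧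
    ∑ j, dualRho d ρ j = ∑ j, ρ j := by
  have hu : ∀ k ≤ d, tailMass ρ k ≠ 0 := fun k _ =>
    (tailMass_pos (fun i => (hρ i).1.le) hρs k).ne'
  refine ⟨?_, dualRho_dualRho hu, funext fun j => congrArg ν j.rev_rev,
    funext fun j => congrArg x j.rev_rev, sum_dualRho hu⟩
  calc krawtchouk d N ρ ν x = krawtchoukOfArgs N (fun j => tailMass ρ j / ρ j) ν x := rfl
    _ = krawtchoukOfArgs N (fun j => tailMass ρ j.rev / ρ j.rev)
          (fun j => x j.rev) (fun j => ν j.rev) := (krawtchoukOfArgs_rev N _ x ν hx hν).symm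
    _ = krawtchoukOfArgs N (fun j => tailMass (dualRho d ρ) j / dualRho d ρ j)
          (fun j => x j.rev) (fun j => ν j.rev) := by simp only [tailMass_div_dualRho hu]
    _ = krawtchouk d N (dualRho d ρ) (fun j => x j.rev) (fun j => ν j.rev) := rfl
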